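/- arXiv:2209.12768 — 3 statements merged into one kernel-verified Lean document; each statement's English description precedes it below -/
import Mathlib

section
/- Let d be a positive integer and let (a_r)_{r∈ℤ}, (b_r)_{r∈ℤ}, (C_r)_{r∈ℤ} be complex sequences satisfying a_r - a_{r+d} = b_r + C_r for all r, where there exist positive reals A and 0 < Q < 1 with |b_r| ≤ A·Q^{|r|} for all r, C_r = 0 for r ∉ [-d, -1], and a_r → 0 as r → ±∞. Then for every integer r, a_r = Σ_{l∈ℤ} sg(r,l)·b_{r+ld}, where sg(r,l) = (sg(r)+sg(l))/2 with sg(n) = 1 if n ≥ 0 and -1 otherwise; in particular the sum converges absolutely. -/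
noncomputable def sg (n : ℤ) : ℂ := if 0 ≤ n then 1 else -1

noncomputable def sg2 (r s : ℤ) : ℂ := (sg r + sg s) / 2

/-!
For `r ≥ 0` the recurrence is only needed at the points `r + n d ≥ 0`, and for `r < 0` only at the
points `r - (n + 1) d < -d`; in both cases `C` vanishes there, so `a x - a (x + d) = b x`, and
summing along the progression telescopes to `a r` because `a` tends to `0` at `±∞`. The weight
`sg2 r l` selects exactly this half of the progression: for `r ≥ 0` it is `1` on `l ≥ 0` and `0`
on `l < 0`, for `r < 0` it is `0` on `l ≥ 0` and `-1` on `l < 0`. The geometric bound on `b`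
makes the two-sided series absolutely summable, so its sum is the telescoped value.
-/

open Filter Topology

lemma norm_sg2_le_one (r s : ℤ) : ‖sg2 r s‖ ≤ 1 := by
  unfold sg2 sg
  split_ifs <;> norm_num

lemma sg2_of_nonneg {r : ℤ} (hr : 0 ≤ r) (s : ℤ) : sg2 r s = if 0 ≤ s then 1 else 0 := by
  unfold sg2 sg
  split_ifs <;> norm_num

lemma sg2_of_neg {r : ℤ} (hr : r < 0) (s : ℤ) : sg2 r s = if 0 ≤ s then 0 else -1 := by
  unfold sg2 sg
  split_ifs <;> first | omega | norm_num

lemma summable_pow_natAbs {Q : ℝ} (hQ0 : 0 ≤ Q) (hQ1 : Q < 1) :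
    Summable fun n : ℤ => Q ^ n.natAbs :=
  .of_nat_of_neg (by simpa using summable_geometric_of_lt_one hQ0 hQ1)
    (by simpa using summable_geometric_of_lt_one hQ0 hQ1)

lemma summable_sg2_mul_comp {b : ℤ → ℂ} (hb : Summable fun n => ‖b n‖) {d : ℕ} (hd : 0 < d)
    (r : ℤ) : Summable fun l : ℤ => sg2 r l * b (r + l * d) := by
  have hinj : Function.Injective fun l : ℤ => r + l * d := fun x y h =>
    mul_right_cancel₀ (Int.natCast_ne_zero.mpr hd.ne') (add_left_cancel h)
  refine .of_norm_bounded (hb.comp_injective hinj) fun l => ?_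
  rw [norm_mul]
  exact mul_le_of_le_one_left (norm_nonneg _) (norm_sg2_le_one r l)

lemma hasSum_sub_succ_of_tendsto_zero {E : Type*} [AddCommGroup E] [TopologicalSpace E]
    [IsTopologicalAddGroup E] [T2Space E] {u : ℕ → E} (hs : Summable fun n => u n - u (n + 1))
    (hu : Tendsto u atTop (𝓝 0)) : HasSum (fun n => u n - u (n + 1)) (u 0) := by
  rw [hs.hasSum_iff_tendsto_nat]
  simp_rw [Finset.sum_range_sub']
  simpa using (tendsto_const_nhds (x := u 0)).sub hu

section Recurrence

variable {d : ℕ} {a b : ℤ → ℂ}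
  (hstep : ∀ x : ℤ, ¬((-d : ℤ) ≤ x ∧ x ≤ -1) → a x - a (x + d) = b x)
include hstep

lemma hasSum_sg2_mul_of_nonneg (hd : 0 < d) (htop : Tendsto a atTop (𝓝 0)) {r : ℤ} (hr : 0 ≤ r)
    (hs : Summable fun l : ℤ => sg2 r l * b (r + l * d)) :
    HasSum (fun l : ℤ => sg2 r l * b (r + l * d)) (a r) := by
  have hforward (n : ℕ) :
      sg2 r n * b (r + n * d) = a (r + n * d) - a (r + (n + 1 : ℕ) * d) := by
    have hx : (0 : ℤ) ≤ r + n * d := by positivity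
    rw [sg2_of_nonneg hr, if_pos n.cast_nonneg, one_mul, ← hstep _ (by omega)]
    push_cast
    congr 2
    ring
  have hbackward (n : ℕ) : sg2 r (-(n + 1)) * b (r + -(n + 1) * d) = 0 := by
    rw [sg2_of_nonneg hr, if_neg (by omega), zero_mul]
  have hu : Tendsto (fun n : ℕ => a (r + n * d)) atTop (𝓝 0) :=
    htop.comp <| tendsto_atTop_add_const_left _ r <|
      tendsto_natCast_atTop_atTop.atTop_mul_const' (by positivity)
  have h₁ : HasSum (fun n : ℕ => sg2 r n * b (r + n * d)) (a r) := by
    have hs' := hs.comp_injective Nat.cast_injective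
    simp only [Function.comp_def, hforward] at hs' ⊢
    simpa only [Nat.cast_zero, zero_mul, add_zero] using
      hasSum_sub_succ_of_tendsto_zero (u := fun n : ℕ => a (r + n * d)) hs' hu
  have h₂ : HasSum (fun n : ℕ => sg2 r (-(n + 1)) * b (r + -(n + 1) * d)) 0 := by
    simpa only [hbackward] using hasSum_zero
  simpa only [add_zero] using
    HasSum.of_nat_of_neg_add_one (f := fun l : ℤ => sg2 r l * b (r + l * d)) h₁ h₂

lemma hasSum_sg2_mul_of_neg (hd : 0 < d) (hbot : Tendsto a atBot (𝓝 0)) {r : ℤ} (hr : r < 0)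
    (hs : Summable fun l : ℤ => sg2 r l * b (r + l * d)) :
    HasSum (fun l : ℤ => sg2 r l * b (r + l * d)) (a r) := by
  have hforward (n : ℕ) : sg2 r n * b (r + n * d) = 0 := by
    rw [sg2_of_neg hr, if_pos n.cast_nonneg, zero_mul]
  have hbackward (n : ℕ) : sg2 r (-(n + 1)) * b (r + -(n + 1) * d) =
      a (r - n * d) - a (r - (n + 1 : ℕ) * d) := by
    have hx : r + -(n + 1) * d < -d := by nlinarith
    rw [sg2_of_neg hr, if_neg (by omega), neg_one_mul, ← hstep _ (by omega), neg_sub]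
    push_cast
    congr 2
    ring
  have hu : Tendsto (fun n : ℕ => a (r - n * d)) atTop (𝓝 0) := by
    refine hbot.comp ?_
    simpa only [sub_eq_add_neg] using tendsto_atBot_add_const_left _ r <|
      tendsto_neg_atBot_iff.mpr <| tendsto_natCast_atTop_atTop.atTop_mul_const' (by positivity)
  have h₁ : HasSum (fun n : ℕ => sg2 r n * b (r + n * d)) 0 := by
    simpa only [hforward] using hasSum_zero
  have h₂ : HasSum (fun n : ℕ => sg2 r (-(n + 1)) * b (r + -(n + 1) * d)) (a r) := by
    have hs' := hs.comp_injective (i := fun n : ℕ => (-(n + 1) : ℤ)) fun m n h => by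
      simpa using h
    simp only [Function.comp_def, hbackward] at hs' ⊢
    simpa only [Nat.cast_zero, zero_mul, sub_zero] using
      hasSum_sub_succ_of_tendsto_zero (u := fun n : ℕ => a (r - n * d)) hs' hu
  simpa only [zero_add] using
    HasSum.of_nat_of_neg_add_one (f := fun l : ℤ => sg2 r l * b (r + l * d)) h₁ h₂

end Recurrence

theorem stmt13_general (d : ℕ) (hd : 1 ≤ d) (a b C : ℤ → ℂ) (A Q : ℝ)
    (hQ0 : 0 < Q) (hQ1 : Q < 1)
    (hrec : ∀ r : ℤ, a r - a (r + d) = b r + C r)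
    (hb : ∀ r : ℤ, ‖b r‖ ≤ A * Q ^ r.natAbs)
    (hC : ∀ r : ℤ, ¬((-d : ℤ) ≤ r ∧ r ≤ -1) → C r = 0)
    (htop : Filter.Tendsto a Filter.atTop (nhds 0))
    (hbot : Filter.Tendsto a Filter.atBot (nhds 0)) :
    ∀ r : ℤ, Summable (fun l : ℤ => sg2 r l * b (r + l * d)) ∧
      a r = ∑' l : ℤ, sg2 r l * b (r + l * d) := by
  have hb' : Summable fun n => ‖b n‖ :=
    ((summable_pow_natAbs hQ0.le hQ1).mul_left A).of_nonneg_of_le (fun _ => norm_nonneg _) hb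
  have hstep (x : ℤ) (hx : ¬((-d : ℤ) ≤ x ∧ x ≤ -1)) : a x - a (x + d) = b x := by
    rw [hrec, hC x hx, add_zero]
  intro r
  have hs := summable_sg2_mul_comp hb' hd r
  refine ⟨hs, (HasSum.tsum_eq ?_).symm⟩
  rcases le_or_gt 0 r with hr | hr
  · exact hasSum_sg2_mul_of_nonneg hstep hd htop hr hs
  · exact hasSum_sg2_mul_of_neg hstep hd hbot hr hs

theorem stmt13 (d : ℕ) (hd : 1 ≤ d) (a b C : ℤ → ℂ) (A Q : ℝ)
    (hA : 0 < A) (hQ0 : 0 < Q) (hQ1 : Q < 1)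
    (hrec : ∀ r : ℤ, a r - a (r + d) = b r + C r)
    (hb : ∀ r : ℤ, ‖b r‖ ≤ A * Q ^ r.natAbs)
    (hC : ∀ r : ℤ, ¬((-d : ℤ) ≤ r ∧ r ≤ -1) → C r = 0)
    (htop : Filter.Tendsto a Filter.atTop (nhds 0))
    (hbot : Filter.Tendsto a Filter.atBot (nhds 0)) :
    ∀ r : ℤ, Summable (fun l : ℤ => sg2 r l * b (r + l * d)) ∧
      a r = ∑' l : ℤ, sg2 r l * b (r + l * d) :=
  stmt13_general d hd a b C A Q hQ0 hQ1 hrec hb hC htop hbot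
end

section
/- Let q ∈ ℂ with 0 < |q| < 1 and let f : ℂ∖{0} → ℂ be given by an absolutely convergent Laurent series f(x) = Σ_{r∈ℤ} a_r x^r satisfying f(qx) = -x^{-2t} f(x) for a positive integer t and all x ≠ 0. Then the coefficients satisfy a_{2tn+s} = (-1)^n q^{2t·n(n-1)/2 + ns} a_s for all integers n and 0 ≤ s < 2t, and hence f(x) = Σ_{s=0}^{2t-1} a_s x^s Σ_{n∈ℤ} q^{2t·binom(n,2)} (-q^s x^{2t})^n. -/
/-!
Comparing the coefficients of `x ^ r` on both sides of `f (q x) = -x ^ (-2t) f x` gives the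
recursion `a (r + 2t) = -q ^ r a r`; the comparison is legitimate because an absolutely
convergent Laurent series is determined by its values on the unit circle, where its coefficients
are Fourier coefficients. Iterating the recursion along each residue class `s` mod `2t` produces
the factor `(-1) ^ n q ^ (2t binom(n,2) + n s)`, and summing the Laurent series class by class
yields the theta-function expansion.
-/

open AddCircle

section FourierCoefficients

variable {T : ℝ} [Fact (0 < T)]

theorem fourierCoeff_eq_of_hasSum {b : ℤ → ℂ} {F : C(AddCircle T, ℂ)}
    (h : HasSum (fun m => b m • fourier m) F) (n : ℤ) : fourierCoeff F n = b n := by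
  let L : C(AddCircle T, ℂ) →L[ℂ] ℂ :=
    (innerSL ℂ (fourierLp 2 n)).comp (ContinuousMap.toLp 2 haarAddCircle ℂ)
  have hL (f : C(AddCircle T, ℂ)) : L f = fourierCoeff f n := by
    rw [← fourierCoeff_toLp, ← fourierBasis_repr, HilbertBasis.repr_apply_apply,
      coe_fourierBasis]
    rfl
  have hsum := L.hasSum h
  simp_rw [L.map_smul, hL, fourierCoeff_fourier, smul_eq_mul] at hsum
  refine hsum.unique ?_
  convert hasSum_single (f := fun m => b m * Pi.single (M := fun _ => ℂ) m 1 n) n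
    fun m hm => by simp [hm.symm] using 1
  simp

theorem summable_smul_fourier {b : ℤ → ℂ} (hb : Summable b) :
    Summable fun m => b m • fourier (T := T) m :=
  .of_norm (by simpa [norm_smul, fourier_norm] using hb.norm)

end FourierCoefficients

theorem eq_of_tsum_mul_zpow_eq_on_circle {b c : ℤ → ℂ} (hb : Summable b) (hc : Summable c)
    (h : ∀ z : Circle, ∑' r, b r * (z : ℂ) ^ r = ∑' r, c r * (z : ℂ) ^ r) : b = c := by
  have hF : ∑' m, b m • fourier (T := 1) m = ∑' m, c m • fourier m := by
    ext x
    rw [← ContinuousMap.tsum_apply (summable_smul_fourier hb),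
      ← ContinuousMap.tsum_apply (summable_smul_fourier hc)]
    simpa [fourier_apply, toCircle_zsmul] using h (toCircle x)
  funext n
  rw [← fourierCoeff_eq_of_hasSum (T := 1) (summable_smul_fourier hb).hasSum n, hF,
    fourierCoeff_eq_of_hasSum (summable_smul_fourier hc).hasSum n]

theorem zpow_neg_mul_tsum_mul_zpow {K : Type*} [Field K] [TopologicalSpace K]
    [IsTopologicalRing K] [T2Space K] {x : K} (hx : x ≠ 0) (a : ℤ → K) (m : ℤ) :
    x ^ (-m) * ∑' r : ℤ, a r * x ^ r = ∑' r : ℤ, a (r + m) * x ^ r := by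
  rw [← tsum_mul_left, ← (Equiv.addRight m).tsum_eq]
  congr 1 with r
  simp only [Equiv.coe_addRight, zpow_add₀ hx, zpow_neg]
  field_simp

theorem coeff_add_eq_neg_zpow_mul_coeff {q : ℂ} {m : ℤ} {a : ℤ → ℂ}
    (ha : Summable a) (haq : Summable fun r => a r * q ^ r)
    (hfe : ∀ z : Circle,
      ∑' r : ℤ, a r * (q * z) ^ r = -(z : ℂ) ^ (-m) * ∑' r : ℤ, a r * (z : ℂ) ^ r)
    (r : ℤ) : a (r + m) = -q ^ r * a r := by
  have hshift : Summable fun r => -a (r + m) :=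
    (ha.comp_injective (add_left_injective m)).neg
  have := congr_fun (eq_of_tsum_mul_zpow_eq_on_circle haq hshift fun z => ?_) r
  · linear_combination this
  · simp only [mul_assoc, ← mul_zpow, hfe, neg_mul, tsum_neg,
      zpow_neg_mul_tsum_mul_zpow z.coe_ne_zero]

theorem eq_neg_one_zpow_mul_zpow_of_add_eq {K : Type*} [Field K] {q : K} (hq : q ≠ 0) {m : ℤ}
    {u : ℤ → K} (h : ∀ r, u (r + m) = -q ^ r * u r) (s n : ℤ) :
    u (m * n + s) = (-1) ^ n * q ^ (m * (n * (n - 1) / 2) + n * s) * u s := by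
  have hstep (k : ℤ) : (-1) ^ (k + 1) * q ^ (m * ((k + 1) * (k + 1 - 1) / 2) + (k + 1) * s)
      = -q ^ (m * k + s) * ((-1) ^ k * q ^ (m * (k * (k - 1) / 2) + k * s)) := by
    have hbinom : (k + 1) * (k + 1 - 1) / 2 = k * (k - 1) / 2 + k := by
      rw [← Int.add_mul_ediv_right _ _ two_ne_zero]; congr 1; ring
    rw [hbinom, zpow_add_one₀ (neg_ne_zero.mpr one_ne_zero),
      show m * (k * (k - 1) / 2 + k) + (k + 1) * s = m * (k * (k - 1) / 2) + k * s + (m * k + s)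
        by ring, zpow_add₀ hq]
    ring
  -- Passing from `k` to `k + 1` multiplies both sides by `-q ^ (m * k + s) ≠ 0`, so the
  -- induction runs in both directions.
  have hiff (k : ℤ) :
      u (m * (k + 1) + s)
          = (-1) ^ (k + 1) * q ^ (m * ((k + 1) * (k + 1 - 1) / 2) + (k + 1) * s) * u s
        ↔ u (m * k + s) = (-1) ^ k * q ^ (m * (k * (k - 1) / 2) + k * s) * u s := by
    rw [show m * (k + 1) + s = m * k + s + m by ring, h, hstep, mul_assoc, mul_assoc,
      mul_right_inj' (neg_ne_zero.mpr (zpow_ne_zero _ hq))]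
  induction n using Int.induction_on with
  | zero => simp
  | succ k ih => exact (hiff k).mpr ih
  | pred k ih => exact (hiff (-k - 1)).mp (by simpa using ih)

theorem Int.tsum_eq_sum_range_tsum_mul_add {R : Type*} [AddCommGroup R] [UniformSpace R]
    [IsUniformAddGroup R] [CompleteSpace R] [T0Space R] {f : ℤ → R} (hf : Summable f) (N : ℕ)
    [NeZero N] : ∑' r, f r = ∑ s ∈ Finset.range N, ∑' n : ℤ, f (N * n + s) := by
  let e : Fin N × ℤ ≃ ℤ := (Equiv.prodComm _ _).trans (Int.divModEquiv N).symm
  rw [← e.tsum_eq f, Summable.tsum_prod (f := fun p => f (e p)) (hf.comp_injective e.injective),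
    tsum_fintype, ← Fin.sum_univ_eq_sum_range (fun s => ∑' n : ℤ, f (N * n + s))]
  simp [e, mul_comm]

theorem neg_one_zpow_mul_zpow_mul_mul_zpow {K : Type*} [Field K] {q x : K} (hq : q ≠ 0)
    (hx : x ≠ 0) (c : K) (e m n s : ℤ) :
    (-1) ^ n * q ^ (e + n * s) * c * x ^ (m * n + s)
      = c * x ^ s * (q ^ e * (-q ^ s * x ^ m) ^ n) := by
  rw [neg_eq_neg_one_mul (q ^ s), mul_zpow, mul_zpow, ← zpow_mul, ← zpow_mul, mul_comm s n,
    zpow_add₀ hq, zpow_add₀ hx]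
  ring

theorem stmt17_general (q : ℂ) (hq0 : 0 < ‖q‖)
    (t : ℕ) (ht : 1 ≤ t) (a : ℤ → ℂ)
    (hsum : ∀ x : ℂ, x ≠ 0 → Summable (fun r : ℤ => a r * x ^ r))
    (hfe : ∀ x : ℂ, x ≠ 0 →
      (∑' r : ℤ, a r * (q * x) ^ r) = -x ^ (-(2 * t : ℤ)) * ∑' r : ℤ, a r * x ^ r) :
    (∀ n : ℤ, ∀ s : ℕ, s < 2 * t →
      a (2 * t * n + s) = (-1 : ℂ) ^ n * q ^ (2 * t * (n * (n - 1) / 2) + n * s) * a s) ∧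
    (∀ x : ℂ, x ≠ 0 →
      (∑' r : ℤ, a r * x ^ r)
        = ∑ s ∈ Finset.range (2 * t), a s * x ^ (s : ℤ)
            * ∑' n : ℤ, q ^ (2 * t * (n * (n - 1) / 2)) * (-q ^ (s : ℤ) * x ^ (2 * t : ℤ)) ^ n) := by
  have hq : q ≠ 0 := norm_pos_iff.mp hq0
  have hrec := coeff_add_eq_neg_zpow_mul_coeff (by simpa using hsum 1 one_ne_zero)
    (by simpa using hsum q hq) fun z => hfe z z.coe_ne_zero
  have hcoeff := eq_neg_one_zpow_mul_zpow_of_add_eq hq hrec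
  refine ⟨fun n s _ => hcoeff s n, fun x hx => ?_⟩
  have : NeZero (2 * t) := ⟨by omega⟩
  rw [Int.tsum_eq_sum_range_tsum_mul_add (hsum x hx) (2 * t)]
  refine Finset.sum_congr rfl fun s _ => ?_
  rw [← tsum_mul_left]
  congr 1 with n
  push_cast
  rw [hcoeff, neg_one_zpow_mul_zpow_mul_mul_zpow hq hx]

theorem stmt17 (q : ℂ) (hq0 : 0 < ‖q‖) (hq1 : ‖q‖ < 1)
    (t : ℕ) (ht : 1 ≤ t) (a : ℤ → ℂ)
    (hsum : ∀ x : ℂ, x ≠ 0 → Summable (fun r : ℤ => a r * x ^ r))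
    (hfe : ∀ x : ℂ, x ≠ 0 →
      (∑' r : ℤ, a r * (q * x) ^ r) = -x ^ (-(2 * t : ℤ)) * ∑' r : ℤ, a r * x ^ r) :
    (∀ n : ℤ, ∀ s : ℕ, s < 2 * t →
      a (2 * t * n + s) = (-1 : ℂ) ^ n * q ^ (2 * t * (n * (n - 1) / 2) + n * s) * a s) ∧
    (∀ x : ℂ, x ≠ 0 →
      (∑' r : ℤ, a r * x ^ r)
        = ∑ s ∈ Finset.range (2 * t), a s * x ^ (s : ℤ)
            * ∑' n : ℤ, q ^ (2 * t * (n * (n - 1) / 2)) * (-q ^ (s : ℤ) * x ^ (2 * t : ℤ)) ^ n) :=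
  stmt17_general q hq0 t ht a hsum hfe
end

section
/- Let q ∈ ℂ with 0 < |q| < 1 and suppose the special polynomial family satisfies f(qx) = -x·f(x) + x^{1-m} + x^m for a fixed positive integer m, where f : ℂ∖{0} → ℂ is given by an everywhere absolutely convergent Laurent series with no poles. Then f(x) = (-1)^{m+1} q^{binom(m,2)} Σ_{r=1-m}^{m-1} (-1)^r q^{-binom(r,2) - r} x^r, where binom(n,2) = n(n-1)/2. -/
/-!
Laurent coefficients are unique (restrict to the unit circle and use orthonormality of the
characters in `L²`), so the functional equation becomes `c r * q ^ r + c (r - 1) = [r = 1 - m] +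
[r = m]`. Since `binom(r - 1, 2) + (r - 1) = binom(r, 2)`, in terms of `a` this reads
`(-1) ^ r * q ^ (-binom(r, 2)) * (a r - a (r - 1)) = [r = 1 - m] + [r = m]`: the sequence `a` is
constant away from two jumps. As `a` tends to `0` at both ends, it vanishes outside
`[1 - m, m - 1]`, and the jump at `m` gives its constant value on that interval.
-/

open Filter Topology AddCircle

theorem HilbertBasis.repr_apply_of_hasSum {ι 𝕜 E : Type*} [RCLike 𝕜] [NormedAddCommGroup E]
    [InnerProductSpace 𝕜 E] (b : HilbertBasis ι 𝕜 E) {c : ι → 𝕜} {x : E}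
    (h : HasSum (fun i => c i • b i) x) (i : ι) : b.repr x i = c i := by
  classical
  have h' := (innerSL 𝕜 (b i)).hasSum h
  simp only [innerSL_apply_apply, inner_smul_right, orthonormal_iff_ite.mp b.orthonormal,
    mul_ite, mul_one, mul_zero] at h'
  rw [b.repr_apply_apply, h'.unique (hasSum_single i fun j hj => if_neg (Ne.symm hj)), if_pos rfl]

theorem eq_zero_of_hasSum_fourier_series_zero {T : ℝ} [Fact (0 < T)] {b : ℤ → ℂ}
    (hb : Summable b) (h : ∀ t : AddCircle T, HasSum (fun n => b n * fourier n t) 0) : b = 0 := by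
  have hs : Summable fun n => b n • (fourier n : C(AddCircle T, ℂ)) :=
    .of_norm (by simpa [norm_smul, fourier_norm] using hb.norm)
  have hzero : ∑' n, b n • (fourier n : C(AddCircle T, ℂ)) = 0 := by
    ext t
    simpa using ((ContinuousMap.evalCLM ℂ t).hasSum hs.hasSum).unique (h t)
  have hL2 : HasSum (fun n => b n • fourierBasis (T := T) n) 0 := by
    have := (ContinuousMap.toLp (E := ℂ) 2 haarAddCircle ℂ).hasSum hs.hasSum
    rw [hzero, map_zero] at this
    simpa only [map_smul, coe_fourierBasis] using this
  ext n
  simpa using (fourierBasis.repr_apply_of_hasSum hL2 n).symm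

theorem eq_zero_of_hasSum_laurent_series_zero {b : ℤ → ℂ}
    (h : ∀ z : Circle, HasSum (fun r => b r * (z : ℂ) ^ r) 0) : b = 0 := by
  have : Fact ((0 : ℝ) < 1) := ⟨one_pos⟩
  refine eq_zero_of_hasSum_fourier_series_zero (T := 1) (by simpa using (h 1).summable) fun t => ?_
  simpa [fourier_apply, toCircle_zsmul] using h (toCircle t)

theorem HasSum.mul_zpow_sub_one {K : Type*} [Semifield K] [TopologicalSpace K]
    [IsTopologicalSemiring K] {c : ℤ → K} {x S : K} (hx : x ≠ 0) (h : HasSum (fun r => c r * x ^ r) S) :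
    HasSum (fun r => c (r - 1) * x ^ r) (x * S) := by
  refine ((Equiv.subRight (1 : ℤ)).hasSum_iff.mpr (h.mul_left x)).congr_fun fun r => ?_
  simp only [Function.comp_apply, Equiv.subRight_apply]
  rw [mul_left_comm, ← zpow_one_add₀ hx, add_sub_cancel]

theorem hasSum_single_one_mul_zpow {K : Type*} [DivisionSemiring K] [TopologicalSpace K] (k : ℤ)
    (x : K) : HasSum (fun r => (Pi.single k 1 : ℤ → K) r * x ^ r) (x ^ k) := by
  simpa using hasSum_single (f := fun r => (Pi.single k 1 : ℤ → K) r * x ^ r) k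
    fun r hr => by simp [hr]

theorem coeff_eq_of_functional_equation {q : ℂ} (hq : q ≠ 0) {c d : ℤ → ℂ} {g : ℂ → ℂ}
    (hsum : ∀ x : ℂ, x ≠ 0 → Summable (fun r : ℤ => c r * x ^ r))
    (hd : ∀ x : ℂ, x ≠ 0 → HasSum (fun r : ℤ => d r * x ^ r) (g x))
    (hfe : ∀ x : ℂ, x ≠ 0 →
      ∑' r : ℤ, c r * (q * x) ^ r = -x * ∑' r : ℤ, c r * x ^ r + g x) (r : ℤ) :
    c r * q ^ r + c (r - 1) = d r := by
  suffices h : (fun r => c r * q ^ r + c (r - 1) - d r) = 0 from sub_eq_zero.mp (congr_fun h r)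
  refine eq_zero_of_hasSum_laurent_series_zero fun z => ?_
  set x : ℂ := ↑z
  have hx : x ≠ 0 := Circle.coe_ne_zero z
  have hdil : HasSum (fun r => c r * q ^ r * x ^ r) (∑' r : ℤ, c r * (q * x) ^ r) := by
    simpa only [mul_zpow, mul_assoc] using (hsum _ (mul_ne_zero hq hx)).hasSum
  have hshift := (hsum x hx).hasSum.mul_zpow_sub_one hx
  have hzero : ∑' r : ℤ, c r * (q * x) ^ r + x * ∑' r : ℤ, c r * x ^ r - g x = 0 := by
    rw [hfe x hx]; ring
  have h := (hdil.add hshift).sub (hd x hx)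
  rw [hzero] at h
  exact h.congr_fun fun r => by ring

theorem Int.sub_one_mul_sub_one_sub_one_ediv_two_add (r : ℤ) :
    (r - 1) * (r - 1 - 1) / 2 + (r - 1) = r * (r - 1) / 2 := by
  rw [show r * (r - 1) = (r - 1) * (r - 1 - 1) + (r - 1) * 2 by ring,
    Int.add_mul_ediv_right _ _ two_ne_zero]

theorem theta_weight_recurrence {K : Type*} [Field K] {q : K} (hq : q ≠ 0) (a : ℤ → K) (r : ℤ) :
    (-1) ^ r * q ^ (-(r * (r - 1) / 2) - r) * a r * q ^ r
      + (-1) ^ (r - 1) * q ^ (-((r - 1) * (r - 1 - 1) / 2) - (r - 1)) * a (r - 1)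
      = (-1) ^ r * q ^ (-(r * (r - 1) / 2)) * (a r - a (r - 1)) := by
  have hexp : -((r - 1) * (r - 1 - 1) / 2) - (r - 1) = -(r * (r - 1) / 2) := by
    rw [← Int.sub_one_mul_sub_one_sub_one_ediv_two_add r]; ring
  rw [hexp, zpow_sub_one₀ (by norm_num), zpow_sub₀ hq, inv_neg_one]
  field_simp
  ring

section ConstantRuns

variable {α : Type*} {a : ℤ → α}

theorem eq_of_forall_apply_eq_apply_sub_one {L U : ℤ} (hLU : L ≤ U)
    (h : ∀ r, L < r → r ≤ U → a r = a (r - 1)) : a L = a U := by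
  induction U, hLU using Int.leInduction with
  | base => rfl
  | succ n hn ih =>
    rw [h (n + 1) (by omega) le_rfl, add_sub_cancel_right, ih fun r h₁ h₂ => h r h₁ (by omega)]

variable [TopologicalSpace α] [T2Space α] {N : ℤ} {y : α}

theorem eq_of_tendsto_atTop_of_apply_eq_apply_sub_one (h : ∀ r, N < r → a r = a (r - 1))
    (ha : Tendsto a atTop (𝓝 y)) {r : ℤ} (hr : N ≤ r) : a r = y := by
  have hconst : ∀ s, N ≤ s → a s = a N := fun s hs =>
    (eq_of_forall_apply_eq_apply_sub_one hs fun t h₁ _ => h t h₁).symm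
  have hN : a N = y := tendsto_nhds_unique
    (tendsto_const_nhds.congr' ((eventually_ge_atTop N).mono fun s hs => (hconst s hs).symm)) ha
  rw [hconst r hr, hN]

theorem eq_of_tendsto_atBot_of_apply_eq_apply_sub_one (h : ∀ r, r ≤ N → a r = a (r - 1))
    (ha : Tendsto a atBot (𝓝 y)) {r : ℤ} (hr : r ≤ N) : a r = y := by
  have hconst : ∀ s, s ≤ N → a s = a N := fun s hs =>
    eq_of_forall_apply_eq_apply_sub_one hs fun t _ h₂ => h t h₂
  have hN : a N = y := tendsto_nhds_unique
    (tendsto_const_nhds.congr' ((eventually_le_atBot N).mono fun s hs => (hconst s hs).symm)) ha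
  rw [hconst r hr, hN]

end ConstantRuns

theorem eq_ite_Icc_of_jumps {q : ℂ} (hq : q ≠ 0) {m : ℤ} (hm : 1 ≤ m) {a : ℤ → ℂ}
    (hatop : Tendsto a atTop (𝓝 0)) (habot : Tendsto a atBot (𝓝 0))
    (hjump : ∀ r, (-1) ^ r * q ^ (-(r * (r - 1) / 2)) * (a r - a (r - 1))
      = (Pi.single (1 - m) 1 + Pi.single m 1 : ℤ → ℂ) r) (r : ℤ) :
    a r = if r ∈ Finset.Icc (1 - m) (m - 1) then (-1) ^ (m + 1) * q ^ (m * (m - 1) / 2) else 0 := by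
  have hflat (r : ℤ) (h₁ : r ≠ 1 - m) (h₂ : r ≠ m) : a r = a (r - 1) := by
    have h := hjump r
    rw [Pi.add_apply, Pi.single_eq_of_ne h₁, Pi.single_eq_of_ne h₂, add_zero] at h
    exact sub_eq_zero.mp ((mul_eq_zero.mp h).resolve_left
      (mul_ne_zero (zpow_ne_zero _ (by norm_num)) (zpow_ne_zero _ hq)))
  have htop : a m = 0 :=
    eq_of_tendsto_atTop_of_apply_eq_apply_sub_one (fun s hs => hflat s (by omega) (by omega))
      hatop le_rfl
  have hlast : a (m - 1) = (-1) ^ (m + 1) * q ^ (m * (m - 1) / 2) := by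
    have h := hjump m
    simp only [htop, Pi.add_apply, Pi.single_eq_same,
      Pi.single_eq_of_ne (show m ≠ 1 - m by omega), zero_add] at h
    have hinv : (-1) ^ m * q ^ (-(m * (m - 1) / 2)) * ((-1) ^ m * q ^ (m * (m - 1) / 2)) = 1 := by
      rw [mul_mul_mul_comm, ← mul_zpow, zpow_neg, inv_mul_cancel₀ (zpow_ne_zero _ hq)]
      norm_num
    rw [zpow_add_one₀ (by norm_num)]
    linear_combination (-((-1) ^ m * q ^ (m * (m - 1) / 2))) * h - a (m - 1) * hinv
  split_ifs with hr <;> rw [Finset.mem_Icc] at hr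
  · rw [← hlast, eq_of_forall_apply_eq_apply_sub_one hr.2 fun s h₁ h₂ =>
      hflat s (by omega) (by omega)]
  · rcases le_or_gt r (-m) with h | h
    · exact eq_of_tendsto_atBot_of_apply_eq_apply_sub_one
        (fun s hs => hflat s (by omega) (by omega)) habot h
    · exact eq_of_tendsto_atTop_of_apply_eq_apply_sub_one
        (fun s hs => hflat s (by omega) (by omega)) hatop (show m ≤ r by omega)

theorem stmt18_general (q : ℂ) (hq0 : 0 < ‖q‖)
    (m : ℤ) (hm : 1 ≤ m) (a : ℤ → ℂ) (c : ℤ → ℂ)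
    (hc : ∀ r : ℤ, c r = (-1 : ℂ) ^ r * q ^ (-(r * (r - 1) / 2) - r) * a r)
    (hatop : Filter.Tendsto a Filter.atTop (nhds 0))
    (habot : Filter.Tendsto a Filter.atBot (nhds 0))
    (hsum : ∀ x : ℂ, x ≠ 0 → Summable (fun r : ℤ => c r * x ^ r))
    (hfe : ∀ x : ℂ, x ≠ 0 →
      (∑' r : ℤ, c r * (q * x) ^ r)
        = -x * (∑' r : ℤ, c r * x ^ r) + x ^ (1 - m) + x ^ m) :
    ∀ x : ℂ, x ≠ 0 →
      (∑' r : ℤ, c r * x ^ r)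
        = (-1 : ℂ) ^ (m + 1) * q ^ (m * (m - 1) / 2)
            * ∑ r ∈ Finset.Icc (1 - m) (m - 1),
                (-1 : ℂ) ^ r * q ^ (-(r * (r - 1) / 2) - r) * x ^ r := by
  have hq : q ≠ 0 := norm_pos_iff.mp hq0
  have ha := eq_ite_Icc_of_jumps hq hm hatop habot fun r => by
    rw [← theta_weight_recurrence hq a r, ← hc r, ← hc (r - 1)]
    refine coeff_eq_of_functional_equation (g := fun x => x ^ (1 - m) + x ^ m) hq hsum
      (fun x _ => ?_) (fun x hx => (hfe x hx).trans (add_assoc _ _ _)) r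
    simpa only [Pi.add_apply, add_mul] using
      (hasSum_single_one_mul_zpow (1 - m) x).add (hasSum_single_one_mul_zpow m x)
  intro x _
  rw [tsum_eq_sum fun r hr => by rw [hc r, ha r, if_neg hr, mul_zero, zero_mul], Finset.mul_sum]
  refine Finset.sum_congr rfl fun r hr => ?_
  rw [hc r, ha r, if_pos hr]
  ring

theorem stmt18 (q : ℂ) (hq0 : 0 < ‖q‖) (hq1 : ‖q‖ < 1)
    (m : ℤ) (hm : 1 ≤ m) (a : ℤ → ℂ) (c : ℤ → ℂ)
    (hc : ∀ r : ℤ, c r = (-1 : ℂ) ^ r * q ^ (-(r * (r - 1) / 2) - r) * a r)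
    (hatop : Filter.Tendsto a Filter.atTop (nhds 0))
    (habot : Filter.Tendsto a Filter.atBot (nhds 0))
    (hsum : ∀ x : ℂ, x ≠ 0 → Summable (fun r : ℤ => c r * x ^ r))
    (hfe : ∀ x : ℂ, x ≠ 0 →
      (∑' r : ℤ, c r * (q * x) ^ r)
        = -x * (∑' r : ℤ, c r * x ^ r) + x ^ (1 - m) + x ^ m) :
    ∀ x : ℂ, x ≠ 0 →
      (∑' r : ℤ, c r * x ^ r)
        = (-1 : ℂ) ^ (m + 1) * q ^ (m * (m - 1) / 2)
            * ∑ r ∈ Finset.Icc (1 - m) (m - 1),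
                (-1 : ℂ) ^ r * q ^ (-(r * (r - 1) / 2) - r) * x ^ r :=
  stmt18_general q hq0 m hm a c hc hatop habot hsum hfe
end
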